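/- Polynomials are not discriminatory: if σ : ℝ → ℝ is a polynomial of degree d, then there exists a nonzero finite signed regular Borel measure μ on a compact set K ⊂ ℝⁿ with nonempty interior such that ∫_K σ(w·x + b) dμ(x) = 0 for all w ∈ ℝⁿ and b ∈ ℝ. -/
import Mathlib

open scoped RealInnerProductSpace
open Polynomial MeasureTheory Finset
open scoped ENNReal

private lemma pnd_taylor_ne_zero (a : ℝ) {P : Polynomial ℝ} (hP0 : P ≠ 0) : taylor a P ≠ 0 := by
  intro h
  exact hP0 (taylor_injective a (by simpa using h))

private lemma pnd_key_deg (a : ℝ) (P : Polynomial ℝ) (hP : P.natDegree ≠ 0) :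
    ((taylor a P) - P).natDegree < P.natDegree := by
  have hP0 : P ≠ 0 := fun h => hP (by simp [h])
  rcases eq_or_ne ((taylor a P) - P) 0 with h | h
  · rw [h, natDegree_zero]; omega
  · apply natDegree_lt_natDegree h
    have hdeg : (taylor a P).degree = P.degree := by
      rw [degree_eq_natDegree hP0, degree_eq_natDegree (pnd_taylor_ne_zero a hP0), natDegree_taylor]
    have hlc : (taylor a P).leadingCoeff = P.leadingCoeff := by
      rw [taylor_apply, leadingCoeff_comp (by simp)]
      simp
    calc (taylor a P - P).degree < (taylor a P).degree :=
          degree_sub_lt hdeg (pnd_taylor_ne_zero a hP0) hlc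
      _ = P.degree := hdeg

private lemma pnd_fwdDiff_iter_poly_zero (a : ℝ) :
    ∀ (m : ℕ) (P : Polynomial ℝ), P.natDegree ≤ m →
      (fwdDiff a)^[m + 1] (fun t => P.eval t) = fun _ => (0:ℝ) := by
  intro m
  induction m with
  | zero =>
    intro P hP
    obtain ⟨c, rfl⟩ := Polynomial.natDegree_eq_zero.mp (Nat.le_zero.mp hP)
    funext t
    simp [fwdDiff]
  | succ m ih =>
    intro P hP
    rw [Function.iterate_succ_apply]
    have h1 : fwdDiff a (fun t => P.eval t) = fun t => ((taylor a P) - P).eval t := by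
      funext t
      simp [fwdDiff, taylor_eval, add_comm]
    rw [h1]
    apply ih
    rcases eq_or_ne P.natDegree 0 with h0 | h0
    · obtain ⟨c, rfl⟩ := Polynomial.natDegree_eq_zero.mp h0
      simp
    · have := pnd_key_deg a P h0
      omega

private lemma pnd_alt_sum_zero (a b : ℝ) (d : ℕ) (P : Polynomial ℝ) (hP : P.natDegree ≤ d) :
    ∑ k ∈ Finset.range (d + 2), (-1:ℝ)^k * ((d+1).choose k : ℝ) * P.eval (b + k * a) = 0 := by
  have hfd := fwdDiff_iter_eq_sum_shift a (fun t => P.eval t) (d+1) b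
  rw [pnd_fwdDiff_iter_poly_zero a d P hP] at hfd
  have hzero : ∑ k ∈ Finset.range (d + 2),
      (-1:ℝ)^(d+1-k) * ((d+1).choose k : ℝ) * P.eval (b + k * a) = 0 := by
    have := hfd.symm
    simpa [zsmul_eq_mul, nsmul_eq_mul, mul_assoc] using this
  calc ∑ k ∈ Finset.range (d + 2), (-1:ℝ)^k * ((d+1).choose k : ℝ) * P.eval (b + k * a)
      = (-1:ℝ)^(d+1) * ∑ k ∈ Finset.range (d + 2),
          (-1:ℝ)^(d+1-k) * ((d+1).choose k : ℝ) * P.eval (b + k * a) := by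
        rw [Finset.mul_sum]
        refine Finset.sum_congr rfl (fun k hk => ?_)
        have hk' : k ≤ d + 1 := by
          have := Finset.mem_range.mp hk; omega
        have hsum : (d + 1 - k) + k = d + 1 := by omega
        have hp : (-1:ℝ)^(d+1-k) * (-1:ℝ)^k = (-1:ℝ)^(d+1) := by
          rw [← pow_add, hsum]
        have sq : (-1:ℝ)^(d+1-k) * (-1:ℝ)^(d+1-k) = 1 := by
          rw [← pow_add]
          exact Even.neg_one_pow ⟨d + 1 - k, rfl⟩
        have h2 : (-1:ℝ)^(d+1) * (-1:ℝ)^(d+1-k) = (-1:ℝ)^k := by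
          rw [← hp]
          linear_combination (-1:ℝ)^k * sq
        linear_combination (((d+1).choose k : ℝ) * P.eval (b + k * a)) * h2.symm
    _ = 0 := by rw [hzero, mul_zero]

private lemma pnd_even_odd_split (d : ℕ) (g : ℕ → ℝ)
    (h0 : ∑ k ∈ Finset.range (d + 2), (-1:ℝ)^k * ((d+1).choose k : ℝ) * g k = 0) :
    ∑ k ∈ Finset.range (d + 2), (if Even k then ((d+1).choose k : ℝ) else 0) * g k
      = ∑ k ∈ Finset.range (d + 2), (if Even k then 0 else ((d+1).choose k : ℝ)) * g k := by
  rw [← sub_eq_zero, ← Finset.sum_sub_distrib]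
  rw [show ∑ k ∈ Finset.range (d + 2),
      ((if Even k then ((d+1).choose k : ℝ) else 0) * g k
        - (if Even k then 0 else ((d+1).choose k : ℝ)) * g k)
      = ∑ k ∈ Finset.range (d + 2), (-1:ℝ)^k * ((d+1).choose k : ℝ) * g k
    from Finset.sum_congr rfl (fun k _ => ?_), h0]
  by_cases he : Even k
  · rw [if_pos he, if_pos he, Even.neg_one_pow he]; ring
  · have ho : Odd k := Nat.not_even_iff_odd.mp he
    rw [if_neg he, if_neg he, Odd.neg_one_pow ho]; ring

theorem polynomial_not_discriminatory (n : ℕ) (hn : 1 ≤ n)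
    (d : ℕ) (P : Polynomial ℝ) (hdeg : P.natDegree = d)
    (σ : ℝ → ℝ) (hσ : σ = fun z => P.eval z) :
    ∃ (K : Set (EuclideanSpace ℝ (Fin n)))
      (μ₁ μ₂ : MeasureTheory.Measure (EuclideanSpace ℝ (Fin n))),
      IsCompact K ∧ (interior K).Nonempty ∧
      MeasureTheory.IsFiniteMeasure μ₁ ∧ MeasureTheory.IsFiniteMeasure μ₂ ∧
      μ₁.Regular ∧ μ₂.Regular ∧
      μ₁ Kᶜ = 0 ∧ μ₂ Kᶜ = 0 ∧ μ₁ ≠ μ₂ ∧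
      ∀ (w : EuclideanSpace ℝ (Fin n)) (b : ℝ),
        ∫ x, σ (⟪w, x⟫ + b) ∂μ₁ = ∫ x, σ (⟪w, x⟫ + b) ∂μ₂ := by
  set E := EuclideanSpace ℝ (Fin n)
  set e : E := EuclideanSpace.single (⟨0, hn⟩ : Fin n) (1:ℝ) with he_def
  have he_norm : ‖e‖ = 1 := by
    rw [he_def, EuclideanSpace.norm_single]; norm_num
  have he_ne : e ≠ 0 := by
    intro h; rw [h] at he_norm; simp at he_norm
  set pt : ℕ → E := fun i => (i:ℝ) • e with hpt_def
  have hpt_norm : ∀ i, ‖pt i‖ = (i : ℝ) := by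
    intro i
    rw [hpt_def]
    simp [norm_smul, he_norm]
  set K : Set E := Metric.closedBall 0 (d + 2) with hK_def
  have hptK : ∀ i ∈ Finset.range (d + 2), pt i ∈ K := by
    intro i hi
    have hi' : i ≤ d + 1 := by have := Finset.mem_range.mp hi; omega
    rw [hK_def, Metric.mem_closedBall, dist_zero_right, hpt_norm]
    exact_mod_cast (show i ≤ d + 2 by omega)
  have hKc : IsCompact K := isCompact_closedBall 0 _
  have hKi : (interior K).Nonempty := by
    refine ⟨0, interior_mono (Metric.ball_subset_closedBall (ε := (d:ℝ) + 2)) ?_⟩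
    rw [Metric.isOpen_ball.interior_eq]
    exact Metric.mem_ball_self (by positivity)
  set C : ℕ → ℝ≥0∞ := fun i => ((d+1).choose i : ℝ≥0∞) with hC_def
  set c₁ : ℕ → ℝ≥0∞ := fun i => if Even i then C i else 0 with hc1_def
  set c₂ : ℕ → ℝ≥0∞ := fun i => if Even i then 0 else C i with hc2_def
  have hc₁top : ∀ i, c₁ i ≠ ⊤ := by
    intro i; by_cases h : Even i <;> simp [hc1_def, hC_def, h]
  have hc₂top : ∀ i, c₂ i ≠ ⊤ := by
    intro i; by_cases h : Even i <;> simp [hc2_def, hC_def, h]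
  set μ₁ : Measure E := ∑ i ∈ Finset.range (d + 2), c₁ i • Measure.dirac (pt i) with hμ1_def
  set μ₂ : Measure E := ∑ i ∈ Finset.range (d + 2), c₂ i • Measure.dirac (pt i) with hμ2_def
  have hfin : ∀ c : ℕ → ℝ≥0∞, (∀ i, c i ≠ ⊤) →
      IsFiniteMeasure (∑ i ∈ Finset.range (d + 2), c i • Measure.dirac (pt i)) := by
    intro c hc
    constructor
    rw [Measure.finset_sum_apply]
    refine ENNReal.sum_lt_top.mpr (fun i _ => ?_)
    simp only [Measure.smul_apply, smul_eq_mul, MeasureTheory.measure_univ, mul_one]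
    exact (hc i).lt_top
  haveI hfin1 : IsFiniteMeasure μ₁ := hfin c₁ hc₁top
  haveI hfin2 : IsFiniteMeasure μ₂ := hfin c₂ hc₂top
  have hcompl : ∀ c : ℕ → ℝ≥0∞,
      (∑ i ∈ Finset.range (d + 2), c i • Measure.dirac (pt i)) Kᶜ = 0 := by
    intro c
    rw [Measure.finset_sum_apply]
    refine Finset.sum_eq_zero (fun i hi => ?_)
    simp only [Measure.smul_apply, smul_eq_mul]
    rw [Measure.dirac_apply, Set.indicator_of_notMem (by simpa using hptK i hi)]
    exact mul_zero _
  have hpt0 : ∀ i : ℕ, pt i = 0 ↔ i = 0 := by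
    intro i
    rw [hpt_def]
    simp [smul_eq_zero, he_ne, Nat.cast_eq_zero]
  have hne : μ₁ ≠ μ₂ := by
    have h1 : μ₁ {(0:E)} = 1 := by
      rw [hμ1_def, Measure.finset_sum_apply]
      rw [Finset.sum_eq_single 0]
      · simp only [Measure.smul_apply, smul_eq_mul]
        rw [Measure.dirac_apply, Set.indicator_of_mem (by simp [(hpt0 0).mpr rfl])]
        simp [hc1_def, hC_def]
      · intro i _ hi0
        simp only [Measure.smul_apply, smul_eq_mul]
        rw [Measure.dirac_apply,
          Set.indicator_of_notMem (by simp only [Set.mem_singleton_iff]; exact fun h => hi0 ((hpt0 i).mp h))]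
        exact mul_zero _
      · intro h; exact absurd (by simp : (0:ℕ) ∈ Finset.range (d+2)) h
    have h2 : μ₂ {(0:E)} = 0 := by
      rw [hμ2_def, Measure.finset_sum_apply]
      refine Finset.sum_eq_zero (fun i _ => ?_)
      rcases eq_or_ne i 0 with rfl | hi0
      · simp [hc2_def]
      · simp only [Measure.smul_apply, smul_eq_mul]
        rw [Measure.dirac_apply,
          Set.indicator_of_notMem (by simp only [Set.mem_singleton_iff]; exact fun h => hi0 ((hpt0 i).mp h))]
        exact mul_zero _
    intro h
    rw [h, h2] at h1
    exact zero_ne_one h1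
  have hint : ∀ (c : ℕ → ℝ≥0∞), (∀ i, c i ≠ ⊤) → ∀ (f : E → ℝ), Continuous f →
      ∫ x, f x ∂(∑ i ∈ Finset.range (d + 2), c i • Measure.dirac (pt i))
        = ∑ i ∈ Finset.range (d + 2), (c i).toReal * f (pt i) := by
    intro c hc f hf
    rw [integral_finset_sum_measure
      (fun i _ => ((integrable_const (f (pt i))).congr (ae_eq_dirac f).symm).smul_measure (hc i))]
    refine Finset.sum_congr rfl (fun i _ => ?_)
    rw [integral_smul_measure, integral_dirac, smul_eq_mul]
  refine ⟨K, μ₁, μ₂, hKc, hKi, hfin1, hfin2, inferInstance, inferInstance,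
    hcompl c₁, hcompl c₂, hne, ?_⟩
  intro w b
  set a : ℝ := ⟪w, e⟫ with ha_def
  have hfc : Continuous (fun x : E => σ (⟪w, x⟫ + b)) := by
    rw [hσ]
    exact P.continuous.comp ((continuous_const.inner continuous_id).add continuous_const)
  rw [hμ1_def, hμ2_def, hint c₁ hc₁top _ hfc, hint c₂ hc₂top _ hfc]
  have hval : ∀ i : ℕ, σ (⟪w, pt i⟫ + b) = P.eval (b + i * a) := by
    intro i
    rw [hσ]
    have harg : ⟪w, pt i⟫ + b = b + i * a := by
      rw [hpt_def]
      simp only [real_inner_smul_right]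
      ring
    simp only []
    rw [harg]
  have ht1 : ∀ i, (c₁ i).toReal = if Even i then ((d+1).choose i : ℝ) else 0 := by
    intro i; by_cases h : Even i <;> simp [hc1_def, hC_def, h]
  have ht2 : ∀ i, (c₂ i).toReal = if Even i then 0 else ((d+1).choose i : ℝ) := by
    intro i; by_cases h : Even i <;> simp [hc2_def, hC_def, h]
  rw [show ∑ i ∈ Finset.range (d + 2), (c₁ i).toReal * σ (⟪w, pt i⟫ + b)
      = ∑ i ∈ Finset.range (d + 2),
          (if Even i then ((d+1).choose i : ℝ) else 0) * P.eval (b + i * a) from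
    Finset.sum_congr rfl (fun i _ => by rw [ht1, hval])]
  rw [show ∑ i ∈ Finset.range (d + 2), (c₂ i).toReal * σ (⟪w, pt i⟫ + b)
      = ∑ i ∈ Finset.range (d + 2),
          (if Even i then 0 else ((d+1).choose i : ℝ)) * P.eval (b + i * a) from
    Finset.sum_congr rfl (fun i _ => by rw [ht2, hval])]
  exact pnd_even_odd_split d (fun k => P.eval (b + k * a))
    (pnd_alt_sum_zero a b d P (le_of_eq hdeg))
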